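/- Let G be a 2×2 real matrix with det G < 0, and let C_{−1,α} be the matrix with rows (−cos α, sin α) and (sin α, cos α). Define θ ∈ (−π, π] by tan θ = (−G₁₂ − G₂₁)/(G₁₁ − G₂₂) (with signs of numerator and denominator determining the quadrant). If |α − θ| < π/2, then both eigenvalues of C_{−1,α}G have negative real parts. -/

import Mathlib

/-!
The reflection `C = !![-cos α, sin α; sin α, cos α]` has determinant `-1`, so `det (C * G) = -det G > 0`,
and `trace (C * G) = -‖z‖ cos (α - arg z)` with `z = (G₀₀ - G₁₁) + (-G₀₁ - G₁₀) i`, which is negative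
when `|α - θ| < π / 2` (`z ≠ 0` because `det G < 0`). A real 2×2 matrix with negative trace and
positive determinant has both eigenvalues in the open left half-plane.
-/

open Matrix Real

lemma Complex.re_neg_of_sq_sub_mul_add_eq_zero {t d : ℝ} (ht : t < 0) (hd : 0 < d) {μ : ℂ}
    (h : μ ^ 2 - t * μ + d = 0) : μ.re < 0 := by
  have him := congrArg Complex.im h
  have hre := congrArg Complex.re h
  simp only [pow_two, Complex.sub_re, Complex.sub_im, Complex.add_re, Complex.add_im,
    Complex.mul_re, Complex.mul_im, Complex.ofReal_re, Complex.ofReal_im, Complex.zero_re,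
    Complex.zero_im] at him hre
  by_contra! hμ
  -- `Re μ ≥ 0 > t / 2` forces `μ` to be real, and a real root of this quadratic is negative.
  have hreal : μ.im = 0 := by
    have : μ.im * (2 * μ.re - t) = 0 := by linear_combination him
    exact (mul_eq_zero.1 this).resolve_right (by linarith)
  rw [hreal] at hre
  nlinarith

lemma Matrix.re_neg_of_mem_spectrum_map_ofReal_fin_two {M : Matrix (Fin 2) (Fin 2) ℝ}
    (htr : M.trace < 0) (hdet : 0 < M.det) :
    ∀ μ ∈ spectrum ℂ (M.map Complex.ofReal), μ.re < 0 := by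
  intro μ hμ
  rw [mem_spectrum_iff_isRoot_charpoly, charpoly_fin_two] at hμ
  refine Complex.re_neg_of_sq_sub_mul_add_eq_zero htr hdet ?_
  simpa [trace_fin_two, det_fin_two] using hμ

lemma Complex.cos_mul_re_add_sin_mul_im (z : ℂ) (α : ℝ) :
    Real.cos α * z.re + Real.sin α * z.im = ‖z‖ * Real.cos (α - arg z) := by
  rcases eq_or_ne z 0 with rfl | hz
  · simp
  rw [Real.cos_sub, cos_arg hz, sin_arg]
  field_simp

lemma Matrix.det_reflection (α : ℝ) : (!![-cos α, sin α; sin α, cos α]).det = -1 := by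
  rw [det_fin_two_of]
  linear_combination -sin_sq_add_cos_sq α

lemma Matrix.trace_reflection_mul (G : Matrix (Fin 2) (Fin 2) ℝ) (α : ℝ) :
    (!![-cos α, sin α; sin α, cos α] * G).trace =
      -(‖(⟨G 0 0 - G 1 1, -G 0 1 - G 1 0⟩ : ℂ)‖ *
        cos (α - Complex.arg ⟨G 0 0 - G 1 1, -G 0 1 - G 1 0⟩)) := by
  rw [← Complex.cos_mul_re_add_sin_mul_im]
  simp [trace_fin_two, vecMul, dotProduct, Fin.sum_univ_two]
  ring

lemma Matrix.det_fin_two_nonneg_of_eq {G : Matrix (Fin 2) (Fin 2) ℝ} (hdiag : G 0 0 = G 1 1)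
    (hanti : G 0 1 = -G 1 0) : 0 ≤ G.det := by
  rw [det_fin_two, hdiag, hanti]
  nlinarith [sq_nonneg (G 1 1), sq_nonneg (G 1 0)]

theorem stmt4 (G : Matrix (Fin 2) (Fin 2) ℝ) (hdet : G.det < 0) (α θ : ℝ)
    (hθ : θ = Complex.arg ⟨G 0 0 - G 1 1, -G 0 1 - G 1 0⟩)
    (hα : |α - θ| < π / 2) :
    ∀ μ ∈ spectrum ℂ
      ((!![-Real.cos α, Real.sin α; Real.sin α, Real.cos α] * G).map Complex.ofReal),
      μ.re < 0 := by
  have hz : (⟨G 0 0 - G 1 1, -G 0 1 - G 1 0⟩ : ℂ) ≠ 0 := by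
    intro h
    have hre : G 0 0 - G 1 1 = 0 := congrArg Complex.re h
    have him : -G 0 1 - G 1 0 = 0 := congrArg Complex.im h
    exact hdet.not_ge (det_fin_two_nonneg_of_eq (by linarith) (by linarith))
  have hcos : 0 < cos (α - θ) := cos_pos_of_mem_Ioo (abs_lt.1 hα)
  apply re_neg_of_mem_spectrum_map_ofReal_fin_two
  · rw [trace_reflection_mul, ← hθ, neg_lt_zero]
    exact mul_pos (norm_pos_iff.2 hz) hcos
  · rw [det_mul, det_reflection]
    linarith
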